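/- Let T be the composition T = T_{σ_n} ∘ ⋯ ∘ T_{σ_1}, where each T_{σ_i} = P_non U_{σ_i} for a unitary U_{σ_i} on a finite-dimensional complex Hilbert space H and P_non the orthogonal projection onto a fixed subspace E_non. Then for any vectors φ, φ′ ∈ H: ‖φ − φ′‖² − ‖T(φ − φ′)‖² ≤ 2[(‖φ‖² − ‖Tφ‖²) + (‖φ′‖² − ‖Tφ′‖²)]. -/

import Mathlib

noncomputable def projOn {H : Type*} [NormedAddCommGroup H] [InnerProductSpace ℂ H]
    (K : Submodule ℂ H) [K.HasOrthogonalProjection] : H →L[ℂ] H :=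
  K.subtypeL.comp (K.orthogonalProjectionOnto)

private def Good {H : Type*} [NormedAddCommGroup H] [InnerProductSpace ℂ H] (f : H → H) : Prop :=
  (∀ x y : H, f (x + y) = f x + f y) ∧ (∀ x y : H, f (x - y) = f x - f y) ∧
    ∀ v : H, ‖f v‖ ≤ ‖v‖

private lemma good_foldl {H : Type*} [NormedAddCommGroup H] [InnerProductSpace ℂ H]
    (l : List (H → H)) (hl : ∀ f ∈ l, Good f) :
    ∀ g : H → H, Good g → Good (l.foldl (fun g f => f ∘ g) g) := by
  induction l with
  | nil => intro g hg; exact hg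
  | cons f t ih =>
    intro g hg
    refine ih (fun f hf => hl f (List.mem_cons_of_mem _ hf)) (f ∘ g) ?_
    obtain ⟨hf1, hf2, hf3⟩ := hl f (List.mem_cons_self (a := f) (l := t))
    obtain ⟨hg1, hg2, hg3⟩ := hg
    exact ⟨fun x y => by simp [Function.comp, hg1, hf1],
      fun x y => by simp [Function.comp, hg2, hf2],
      fun v => le_trans (hf3 _) (hg3 v)⟩

theorem stmt4 {H : Type*} [NormedAddCommGroup H] [InnerProductSpace ℂ H]
    [FiniteDimensional ℂ H]
    (Eacc Erej Enon : Submodule ℂ H)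
    (har : Eacc ≤ Erejᗮ) (han : Eacc ≤ Enonᗮ) (hrn : Erej ≤ Enonᗮ)
    (hsum : Eacc ⊔ Erej ⊔ Enon = ⊤)
    (n : ℕ) (U : Fin n → (H ≃ₗᵢ[ℂ] H)) (T : H → H)
    (hT : T = (List.ofFn (fun i : Fin n => fun v : H => projOn Enon (U i v))).foldl
      (fun g f => f ∘ g) id)
    (φ φ' : H) :
    ‖φ - φ'‖ ^ 2 - ‖T (φ - φ')‖ ^ 2 ≤
      2 * ((‖φ‖ ^ 2 - ‖T φ‖ ^ 2) + (‖φ'‖ ^ 2 - ‖T φ'‖ ^ 2)) := by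
  have hgood : Good T := by
    rw [hT]
    refine good_foldl _ ?_ id ⟨fun x y => rfl, fun x y => rfl, fun v => le_rfl⟩
    intro f hf
    simp only [List.mem_ofFn] at hf
    obtain ⟨i, rfl⟩ := hf
    refine ⟨fun x y => by simp, fun x y => by simp, fun v => ?_⟩
    have h1 : ‖projOn Enon (U i v)‖ ≤ ‖U i v‖ := by
      calc ‖projOn Enon (U i v)‖ = ‖Enon.orthogonalProjectionOnto (U i v)‖ := rfl
        _ ≤ ‖Enon.orthogonalProjectionOnto‖ * ‖U i v‖ :=
            (Enon.orthogonalProjectionOnto).le_opNorm _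
        _ ≤ 1 * ‖U i v‖ :=
            mul_le_mul_of_nonneg_right (Submodule.orthogonalProjectionOnto_norm_le Enon) (norm_nonneg _)
        _ = ‖U i v‖ := one_mul _
    simpa using h1
  obtain ⟨hadd, hsub, hle⟩ := hgood
  have hpar := parallelogram_law_with_norm ℂ φ φ'
  have hpar2 := parallelogram_law_with_norm ℂ (T φ) (T φ')
  have h1 : ‖T (φ + φ')‖ ≤ ‖φ + φ'‖ := hle _
  have h2 : T (φ + φ') = T φ + T φ' := hadd φ φ'
  have h3 : T (φ - φ') = T φ - T φ' := hsub φ φ'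
  rw [h2] at h1
  rw [h3]
  nlinarith [norm_nonneg (T φ + T φ'), norm_nonneg (φ + φ'), sq_abs (‖φ+φ'‖)]
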